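/- For a Werner state ρ_W = (1/(d³−d))[(d−f) I + (df−1) F] with −1 ≤ f ≤ 1/d, the trace norm of its realignment equals 2/d − f. In particular at f = −1 it equals 1 + 2/d. -/

import Mathlib

open Matrix
open scoped ComplexOrder

/-- The realignment map on matrices on `ℂ^d ⊗ ℂ^d`:
`R(X)_{(i,j),(k,l)} = X_{(i,k),(j,l)}`. -/
def realign (d : ℕ) (X : Matrix (Fin d × Fin d) (Fin d × Fin d) ℂ) :
    Matrix (Fin d × Fin d) (Fin d × Fin d) ℂ :=
  Matrix.of fun p q => X (p.1, q.1) (p.2, q.2)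

/-- The unnormalized maximally entangled vector `|u⟩ = ∑ i, |i⟩ ⊗ |i⟩`. -/
def uVec (d : ℕ) : Fin d × Fin d → ℂ := fun p => if p.1 = p.2 then 1 else 0

/-- The rank-one operator `|u⟩⟨u| = ∑ i j, |i⟩⟨j| ⊗ |i⟩⟨j|`. -/
def uuMat (d : ℕ) : Matrix (Fin d × Fin d) (Fin d × Fin d) ℂ :=
  Matrix.vecMulVec (uVec d) (star (uVec d))

/-- The swap (flip) operator `F = ∑ i j, |i⟩⟨j| ⊗ |j⟩⟨i|`. -/
def swapF (d : ℕ) : Matrix (Fin d × Fin d) (Fin d × Fin d) ℂ :=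
  Matrix.of fun p q => if p.1 = q.2 ∧ p.2 = q.1 then 1 else 0

/-- The positive semidefinite square root of a positive semidefinite matrix
(the former Mathlib `Matrix.PosSemidef.sqrt`, spelled out). -/
noncomputable def posSemidefSqrt {n : Type*} [Fintype n] [DecidableEq n]
    {A : Matrix n n ℂ} (hA : A.PosSemidef) : Matrix n n ℂ :=
  (hA.1.eigenvectorUnitary : Matrix n n ℂ) * diagonal (((↑) : ℝ → ℂ) ∘ (√·) ∘ hA.1.eigenvalues) *
    (star hA.1.eigenvectorUnitary : Matrix n n ℂ)

/-- The trace norm `‖X‖₁ = Tr √(X Xᴴ)` of a (possibly rectangular) complex matrix. -/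
noncomputable def traceNorm {m n : Type*} [Fintype m] [Fintype n] [DecidableEq m]
    (X : Matrix m n ℂ) : ℝ :=
  (posSemidefSqrt (Matrix.posSemidef_self_mul_conjTranspose X)).trace.re

/-- The `d ⊗ d` Werner state `ρ_W = (1/(d³−d)) [(d−f) I + (df−1) F]`. -/
noncomputable def wernerState (d : ℕ) (f : ℝ) :
    Matrix (Fin d × Fin d) (Fin d × Fin d) ℂ :=
  (((d : ℂ) ^ 3 - (d : ℂ))⁻¹) •
    ((((d : ℝ) - f : ℝ) : ℂ) • 1 + (((d : ℝ) * f - 1 : ℝ) : ℂ) • swapF d)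

/-!
Realignment sends `I` to `|u⟩⟨u| = d Q`, where `Q` is the projection onto the maximally
entangled vector, and fixes `F`; hence `R(ρ_W) = b F + c Q` with `b = (df − 1)/(d³ − d)` and
`b + c = 1/d`. As `F` is a self-adjoint unitary with `F Q = Q`, `(b F + c Q)² = b² (1 − Q) +
(b + c)² Q`, so `|b F + c Q| = |b| (1 − Q) + |b + c| Q`. Its trace is `|b| (d² − 1) + 1/d`,
which equals `2/d − f` because `b ≤ 0` for `f ≤ 1/d`.
-/

section

open scoped MatrixOrder

lemma traceNorm_eq_trace_re_of_mul_self_eq {m n : Type*} [Fintype m] [Fintype n] [DecidableEq m]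
    {X : Matrix m n ℂ} {S : Matrix m m ℂ} (hS : S.PosSemidef) (h : S * S = X * Xᴴ) :
    traceNorm X = S.trace.re := by
  have hXX := posSemidef_self_mul_conjTranspose X
  suffices posSemidefSqrt hXX = CFC.sqrt (X * Xᴴ) by
    rw [traceNorm, this, CFC.sqrt_unique h hS.nonneg]
  rw [CFC.sqrt_eq_cfc, cfc_nnreal_eq_real _ _ hXX.nonneg, hXX.1.cfc_eq]
  simp only [IsHermitian.cfc, posSemidefSqrt, Unitary.conjStarAlgAut_apply]
  congr 3
  ext i
  simp [Real.coe_toNNReal', hXX.eigenvalues_nonneg i]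

lemma traceNorm_smul_add_smul_of_isStarProjection {n : Type*} [Fintype n] [DecidableEq n]
    {F Q : Matrix n n ℂ} (hF : F.IsHermitian) (hF2 : F * F = 1) (hQ : IsStarProjection Q)
    (hFQ : F * Q = Q) (b c : ℝ) :
    traceNorm ((b : ℂ) • F + (c : ℂ) • Q) =
      |b| * (Fintype.card n - Q.trace.re) + |b + c| * Q.trace.re := by
  have hQh : Qᴴ = Q := hQ.isSelfAdjoint
  have hQF : Q * F = Q := by
    simpa [conjTranspose_mul, hF.eq, hQh] using congr_arg conjTranspose hFQ
  have hQ2 : Q * Q = Q := hQ.isIdempotentElem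
  set S : Matrix n n ℂ := ((|b| : ℝ) : ℂ) • (1 - Q) + ((|b + c| : ℝ) : ℂ) • Q
  have hS : S.PosSemidef := (add_nonneg (smul_nonneg (by simp) hQ.one_sub.nonneg)
    (smul_nonneg (by simp) hQ.nonneg)).posSemidef
  have hSS :
      S * S = ((b : ℂ) • F + (c : ℂ) • Q) * ((b : ℂ) • F + (c : ℂ) • Q)ᴴ := by
    have hb : ((|b| : ℝ) : ℂ) ^ 2 = b ^ 2 := by exact_mod_cast sq_abs b
    have hbc : ((|b + c| : ℝ) : ℂ) ^ 2 = (b + c) ^ 2 := by exact_mod_cast sq_abs (b + c)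
    simp only [S, conjTranspose_add, conjTranspose_smul, hF.eq, hQh, Complex.star_def,
      Complex.conj_ofReal, add_mul, mul_add, smul_mul_assoc, mul_smul_comm, mul_sub,
      sub_mul, mul_one, one_mul, hF2, hQ2, hFQ, hQF, smul_sub]
    match_scalars
    · linear_combination hb
    · linear_combination hbc - hb
  rw [traceNorm_eq_trace_re_of_mul_self_eq hS hSS]
  simp [S, trace_sub]

end

lemma star_uVec (d : ℕ) : star (uVec d) = uVec d := by
  ext p
  simp [uVec, apply_ite]

lemma uVec_dotProduct_uVec (d : ℕ) : uVec d ⬝ᵥ uVec d = d := by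
  simp [uVec, dotProduct, Fintype.sum_prod_type]

lemma uuMat_eq_vecMulVec (d : ℕ) : uuMat d = vecMulVec (uVec d) (uVec d) := by
  rw [uuMat, star_uVec]

lemma uuMat_mul_self (d : ℕ) : uuMat d * uuMat d = (d : ℂ) • uuMat d := by
  rw [uuMat_eq_vecMulVec, vecMulVec_mul_vecMulVec, uVec_dotProduct_uVec, vecMulVec_smul]

lemma trace_uuMat (d : ℕ) : (uuMat d).trace = d := by
  rw [uuMat_eq_vecMulVec, trace_vecMulVec, uVec_dotProduct_uVec]

lemma swapF_mulVec_uVec (d : ℕ) : swapF d *ᵥ uVec d = uVec d := by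
  ext p
  simp [swapF, uVec, mulVec, dotProduct, Fintype.sum_prod_type, ite_and, eq_comm]

lemma swapF_mul_uuMat (d : ℕ) : swapF d * uuMat d = uuMat d := by
  rw [uuMat, mul_vecMulVec, swapF_mulVec_uVec]

lemma swapF_mul_self (d : ℕ) : swapF d * swapF d = 1 := by
  ext p q
  simp [mul_apply, swapF, one_apply, Fintype.sum_prod_type, ite_and, Prod.ext_iff]

lemma isHermitian_swapF (d : ℕ) : (swapF d).IsHermitian := by
  ext p q
  simp [swapF, apply_ite (star : ℂ → ℂ), and_comm, eq_comm]

noncomputable def maxEntProj (d : ℕ) : Matrix (Fin d × Fin d) (Fin d × Fin d) ℂ :=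
  (d : ℂ)⁻¹ • uuMat d

lemma isStarProjection_maxEntProj (d : ℕ) : IsStarProjection (maxEntProj d) := by
  refine ⟨?_, ?_⟩
  · rw [IsIdempotentElem, maxEntProj, smul_mul_smul, uuMat_mul_self, smul_smul]
    congr 1
    simpa using mul_self_mul_inv ((d : ℂ)⁻¹)
  · exact (IsSelfAdjoint.natCast (R := ℂ) d).inv₀.smul
      (posSemidef_vecMulVec_self_star (uVec d)).isHermitian

lemma swapF_mul_maxEntProj (d : ℕ) : swapF d * maxEntProj d = maxEntProj d := by
  rw [maxEntProj, mul_smul_comm, swapF_mul_uuMat]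

lemma trace_maxEntProj {d : ℕ} (hd : d ≠ 0) : (maxEntProj d).trace = 1 := by
  rw [maxEntProj, trace_smul, trace_uuMat, smul_eq_mul, inv_mul_cancel₀ (by exact_mod_cast hd)]

lemma realign_add (d : ℕ) (X Y : Matrix (Fin d × Fin d) (Fin d × Fin d) ℂ) :
    realign d (X + Y) = realign d X + realign d Y := rfl

lemma realign_smul (d : ℕ) (a : ℂ) (X : Matrix (Fin d × Fin d) (Fin d × Fin d) ℂ) :
    realign d (a • X) = a • realign d X := rfl

lemma realign_one (d : ℕ) : realign d 1 = uuMat d := by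
  ext p q
  simp only [realign, uuMat_eq_vecMulVec, uVec, vecMulVec_apply, one_apply, of_apply,
    Prod.ext_iff, mul_ite, mul_one, mul_zero]
  split_ifs <;> simp_all

lemma realign_swapF (d : ℕ) : realign d (swapF d) = swapF d := by
  ext p q
  simp [realign, swapF, @eq_comm _ q.1]

lemma realign_wernerState {d : ℕ} (hd : d ≠ 0) (f : ℝ) :
    realign d (wernerState d f) =
      (((d * f - 1) / (d ^ 3 - d) : ℝ) : ℂ) • swapF d +
        (((d - f) * d / (d ^ 3 - d) : ℝ) : ℂ) • maxEntProj d := by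
  rw [wernerState, realign_smul, realign_add, realign_smul, realign_smul, realign_one,
    realign_swapF, maxEntProj, smul_smul]
  have : (d : ℂ) ≠ 0 := by exact_mod_cast hd
  match_scalars <;> field_simp

theorem traceNorm_realign_wernerState_general (d : ℕ) (hd : 2 ≤ d) (f : ℝ)
    (hf2 : f ≤ 1 / d) :
    traceNorm (realign d (wernerState d f)) = 2 / d - f ∧
    (f = -1 → traceNorm (realign d (wernerState d f)) = 1 + 2 / d) := by
  have hd0 : d ≠ 0 := by omega
  have hd2 : (2 : ℝ) ≤ d := by exact_mod_cast hd
  have hsq : (0 : ℝ) < d ^ 2 - 1 := by nlinarith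
  have hN : (0 : ℝ) < d ^ 3 - d := by nlinarith
  have hb : (d * f - 1) / (d ^ 3 - d) ≤ (0 : ℝ) := by
    have : (d : ℝ) * f ≤ 1 := by
      rwa [le_div_iff₀ (by positivity), mul_comm] at hf2
    exact div_nonpos_of_nonpos_of_nonneg (by linarith) hN.le
  have hbc : (d * f - 1) / (d ^ 3 - d) + (d - f) * d / (d ^ 3 - d) = (1 / d : ℝ) := by
    field_simp
    ring
  have h : traceNorm (realign d (wernerState d f)) = 2 / d - f := by
    rw [realign_wernerState hd0, traceNorm_smul_add_smul_of_isStarProjection (isHermitian_swapF d)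
      (swapF_mul_self d) (isStarProjection_maxEntProj d) (swapF_mul_maxEntProj d),
      trace_maxEntProj hd0, abs_of_nonpos hb, hbc, abs_of_pos (by positivity)]
    simp only [Fintype.card_prod, Fintype.card_fin, Nat.cast_mul, Complex.one_re]
    field_simp
    ring
  exact ⟨h, fun hf => by rw [h, hf]; ring⟩

/-- For a Werner state with `−1 ≤ f ≤ 1/d`, the trace norm of its realignment equals
`2/d − f`; in particular at `f = −1` it equals `1 + 2/d`. -/
theorem traceNorm_realign_wernerState (d : ℕ) (hd : 2 ≤ d) (f : ℝ)
    (hf1 : -1 ≤ f) (hf2 : f ≤ 1 / d) :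
    traceNorm (realign d (wernerState d f)) = 2 / d - f ∧
    (f = -1 → traceNorm (realign d (wernerState d f)) = 1 + 2 / d) :=
  traceNorm_realign_wernerState_general d hd f hf2
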